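/- There exists a graph pattern P that is Web-safe but satisfies CBV(P | ∅) ≠ vars(P); concretely, for P = (⟨u1, p1, ?x⟩ UNION ⟨u2, p2, ?y⟩) with IRIs u1, u2, p1, p2 and distinct variables ?x, ?y, it holds that CBV(P | ∅) = ∅ ≠ {?x, ?y} = vars(P), yet [[P]]_W^ctx can be computed for any finite WoLD W by looking up only finitely many IRIs (namely u1 and u2). -/

import Mathlib

/-- SPARQL property path expressions. -/
inductive PPE : Type where
  | iri : String → PPE
  | neg : List String → PPE
  | inv : PPE → PPE
  | seq : PPE → PPE → PPE
  | alt : PPE → PPE → PPE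
  | star : PPE → PPE

/-- Subject/object terms of a property path pattern: IRIs, literals, or variables. -/
inductive Trm : Type where
  | iri : String → Trm
  | lit : String → Trm
  | var : ℕ → Trm

/-- Graph patterns: property path patterns closed under AND, UNION, OPT. -/
inductive GP : Type where
  | pp : Trm → PPE → Trm → GP
  | and : GP → GP → GP
  | union : GP → GP → GP
  | opt : GP → GP → GP

def Trm.vars : Trm → Set ℕ
  | .var v => {v}
  | _ => ∅

def GP.vars : GP → Set ℕ
  | .pp a _ b => a.vars ∪ b.vars
  | .and P Q => P.vars ∪ Q.vars
  | .union P Q => P.vars ∪ Q.vars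
  | .opt P Q => P.vars ∪ Q.vars

def PPE.size : PPE → ℕ
  | .iri _ => 1
  | .neg _ => 1
  | .inv e => 1 + e.size
  | .seq e f => 1 + e.size + f.size
  | .alt e f => 1 + e.size + f.size
  | .star e => 2 + e.size

def GP.size : GP → ℕ
  | .pp _ e _ => 3 * e.size
  | .and P Q => 1 + P.size + Q.size
  | .union P Q => 1 + P.size + Q.size
  | .opt P Q => 1 + P.size + Q.size

/-- RDF terms: IRIs, blank nodes, literals. -/
inductive RT : Type where
  | iri : String → RT
  | bnode : ℕ → RT
  | lit : String → RT
deriving DecidableEq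

/-- RDF triples (subject, predicate IRI, object). -/
abbrev Triple := RT × String × RT

/-- A solution mapping: a partial function from variables to RDF terms. -/
def SolMap := ℕ → Option RT

/-- The domain of a solution mapping. -/
def domOf (μ : SolMap) : Set ℕ := {v | μ v ≠ none}

/-- Compatibility of solution mappings. -/
def Compat (μ1 μ2 : SolMap) : Prop :=
  ∀ v a b, μ1 v = some a → μ2 v = some b → a = b

/-- Union of solution mappings. -/
def munion (μ1 μ2 : SolMap) : SolMap :=
  fun v => (μ1 v).orElse (fun _ => μ2 v)

/-- The empty solution mapping. -/
def emptyMap : SolMap := fun _ => none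

/-- A (finite) Web of Linked Data `W = ⟨D, data, adoc⟩`: a finite set of documents,
each with a finite set of RDF triples, and a partial map from IRIs to documents. -/
structure WoLD where
  D : Type
  fin : Finite D
  data : D → Finset Triple
  adoc : String → Option D

/-- The context selector `C_W`: an IRI `u` retrieving a document is mapped to the
triples of that document having subject `u`; everything else is mapped to `∅`. -/
def Cw (W : WoLD) : RT → Set Triple
  | .iri u =>
      match W.adoc u with
      | some d => {t | t ∈ W.data d ∧ t.1 = RT.iri u}
      | none => ∅
  | _ => ∅

/-- All RDF terms appearing in some document of `W`. -/
def termsOf (W : WoLD) : Set RT :=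
  {t | ∃ d : W.D, ∃ tr ∈ W.data d, t = tr.1 ∨ t = RT.iri tr.2.1 ∨ t = tr.2.2}

/-- Applying a solution mapping to a subject/object term of a pattern. -/
def appT (μ : SolMap) : Trm → Option RT
  | .iri u => some (.iri u)
  | .lit l => some (.lit l)
  | .var v => μ v

attribute [local instance] Classical.propDecidable

/-- Multiset union of multisets of solution mappings (represented by their
cardinality functions): cardinalities add. -/
noncomputable def unionC (M1 M2 : SolMap → ℕ∞) : SolMap → ℕ∞ :=
  fun μ => M1 μ + M2 μ

/-- The join of two multisets of solution mappings. -/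
noncomputable def joinC (M1 M2 : SolMap → ℕ∞) : SolMap → ℕ∞ :=
  fun μ => ∑' p : SolMap × SolMap,
    if Compat p.1 p.2 ∧ munion p.1 p.2 = μ then M1 p.1 * M2 p.2 else 0

/-- Multiset difference `M1 ∖ M2`: the mappings of `M1` that are incompatible with
every mapping of `M2`, with unchanged cardinalities. -/
noncomputable def diffC (M1 M2 : SolMap → ℕ∞) : SolMap → ℕ∞ :=
  fun μ => if ∀ μ2, M2 μ2 ≠ 0 → ¬ Compat μ μ2 then M1 μ else 0

/-- Restriction of a solution mapping to a set of variables. -/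
noncomputable def restrictMap (μ : SolMap) (V : Set ℕ) : SolMap :=
  fun v => if v ∈ V then μ v else none

/-- Projection `π_V` of a multiset of solution mappings. -/
noncomputable def projC (V : Set ℕ) (M : SolMap → ℕ∞) : SolMap → ℕ∞ :=
  fun μ => ∑' μ' : SolMap, if restrictMap μ' V = μ then M μ' else 0

def Trm.varBound : Trm → ℕ
  | .var v => v + 1
  | _ => 0

/-- A variable not occurring in `a` or `b`. -/
def freshVar (a b : Trm) : ℕ := max a.varBound b.varBound

/-- Context-based semantics `[[·]]_W^ctx` of graph patterns over a Web of Linked Data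
(Definition 3 of Hartig & Pirrò), as a multiset of solution mappings represented by its
cardinality function. The auxiliary reachability functions ALPW1/ALPW2 are rendered by
the reflexive-transitive closure of the one-step relation given by evaluating
`⟨?x, e, ?y⟩`; the star case `⟨?x,(e)*,c⟩` with constant object is reduced (inlined) to
`⟨c,(^e)*,?x⟩`. -/
noncomputable def evalCB (W : WoLD) : GP → SolMap → ℕ∞
  | .pp a (.iri p) b => fun μ =>
      if domOf μ = a.vars ∪ b.vars ∧
         ∃ s o, appT μ a = some s ∧ appT μ b = some o ∧ (s, p, o) ∈ Cw W s
      then 1 else 0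
  | .pp a (.neg L) b => fun μ =>
      if domOf μ = a.vars ∪ b.vars ∧
         ∃ s o p, p ∉ L ∧ appT μ a = some s ∧ appT μ b = some o ∧ (s, p, o) ∈ Cw W s
      then 1 else 0
  | .pp a (.inv e) b => evalCB W (.pp b e a)
  | .pp a (.alt e f) b =>
      unionC (evalCB W (.pp a e b)) (evalCB W (.pp a f b))
  | .pp a (.seq e f) b =>
      projC (a.vars ∪ b.vars)
        (joinC (evalCB W (.pp a e (.var (freshVar a b))))
               (evalCB W (.pp (.var (freshVar a b)) f b)))
  | .pp (.var x) (.star e) (.var y) => fun μ =>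
      if domOf μ = {x, y} ∧
         ∃ s t, μ x = some s ∧ μ y = some t ∧ s ∈ termsOf W ∧
           Relation.ReflTransGen
             (fun c c' => ∃ ν : SolMap,
               evalCB W (.pp (.var 0) e (.var 1)) ν ≠ 0 ∧ ν 0 = some c ∧ ν 1 = some c')
             s t
      then 1 else 0
  | .pp (.var x) (.star e) b => fun μ =>
      -- b is a constant: `⟨?x,(e)*,c⟩` is evaluated as `⟨c,(^e)*,?x⟩`
      if domOf μ = {x} ∧
         ∃ s t, appT μ b = some s ∧ μ x = some t ∧
           Relation.ReflTransGen
             (fun c c' => ∃ ν : SolMap,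
               evalCB W (.pp (.var 0) (.inv e) (.var 1)) ν ≠ 0 ∧ ν 0 = some c ∧ ν 1 = some c')
             s t
      then 1 else 0
  | .pp a (.star e) (.var y) => fun μ =>
      -- a is a constant
      if domOf μ = {y} ∧
         ∃ s t, appT μ a = some s ∧ μ y = some t ∧
           Relation.ReflTransGen
             (fun c c' => ∃ ν : SolMap,
               evalCB W (.pp (.var 0) e (.var 1)) ν ≠ 0 ∧ ν 0 = some c ∧ ν 1 = some c')
             s t
      then 1 else 0
  | .pp a (.star e) b => fun μ =>
      -- a and b are constants
      if domOf μ = (∅ : Set ℕ) ∧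
         ∃ s t, appT μ a = some s ∧ appT μ b = some t ∧
           Relation.ReflTransGen
             (fun c c' => ∃ ν : SolMap,
               evalCB W (.pp (.var 0) e (.var 1)) ν ≠ 0 ∧ ν 0 = some c ∧ ν 1 = some c')
             s t
      then 1 else 0
  | .and P Q => joinC (evalCB W P) (evalCB W Q)
  | .union P Q => unionC (evalCB W P) (evalCB W Q)
  | .opt P Q =>
      unionC (joinC (evalCB W P) (evalCB W Q)) (diffC (evalCB W P) (evalCB W Q))
termination_by P => P.size
decreasing_by all_goals simp only [GP.size, PPE.size]; omega

/-- Strongly bound variables. -/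
def GP.cvars : GP → Set ℕ
  | .pp a _ b => a.vars ∪ b.vars
  | .and P Q => P.cvars ∪ Q.cvars
  | .union P Q => P.cvars ∩ Q.cvars
  | .opt P _ => P.cvars

/-- A term is an IRI, a literal, or a variable belonging to `X`. -/
def Trm.boundIn : Trm → Set ℕ → Prop
  | .var v, X => v ∈ X
  | _, _ => True

def Trm.isVar : Trm → Prop
  | .var _ => True
  | _ => False

/-- Conditionally Web-bounded variables `CBV(P | X)` (Definition 5 of Hartig & Pirrò).
The case of a star pattern with variable subject and non-variable object, which the
definition reduces to the swapped pattern `⟨β,(^e)*,α⟩`, is inlined (the swapped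
pattern has a non-variable subject, so its value is given by the subsequent cases). -/
noncomputable def CBV : GP → Set ℕ → Set ℕ
  | .pp a (.iri u) b, X => if a.boundIn X then (GP.pp a (.iri u) b).vars else ∅
  | .pp a (.neg l) b, X => if a.boundIn X then (GP.pp a (.neg l) b).vars else ∅
  | .pp a (.inv e) b, X => CBV (.pp b e a) X
  | .pp a (.alt e f) b, X => CBV (.union (.pp a e b) (.pp a f b)) X
  | .pp a (.seq e f) b, X =>
      if h : ∃ v : ℕ, v ∉ X ∧ Trm.var v ≠ a ∧ Trm.var v ≠ b ∧
          v ∈ CBV (.and (.pp a e (.var v)) (.pp (.var v) f b)) X then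
        CBV (.and (.pp a e (.var h.choose)) (.pp (.var h.choose) f b)) X \ {h.choose}
      else ∅
  | .pp a (.star e) b, X =>
      if a.isVar ∧ ¬ b.isVar then
        (if ∀ x y : ℕ, CBV (.pp (.var x) (.inv e) (.var y)) {x} = {x, y} then
          CBV (.pp b (.inv e) a) X
        else ∅)
      else
        (if ∀ x y : ℕ, CBV (.pp (.var x) e (.var y)) {x} = {x, y} then
          CBV (.pp a e b) X
        else ∅)
  | .and P Q, X =>
      if (CBV P X = P.vars ∧ CBV Q X = Q.vars) ∨
         (CBV P X = P.vars ∧ CBV Q (X ∪ P.cvars) = Q.vars) ∨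
         (CBV Q X = Q.vars ∧ CBV P (X ∪ Q.cvars) = P.vars) then
        (GP.and P Q).vars
      else ∅
  | .union P Q, X => CBV P X ∩ CBV Q X
  | .opt P Q, X =>
      if (CBV P X = P.vars ∧ CBV Q X = Q.vars) ∨
         (CBV P X = P.vars ∧ CBV Q (X ∪ P.cvars) = Q.vars) then
        (GP.opt P Q).vars
      else ∅
termination_by P _ => P.size
decreasing_by all_goals simp only [GP.size, PPE.size]; omega

/-! `CBV` of a UNION is the intersection of the `CBV` of its branches, and a triple pattern
with IRI subject binds exactly its object variable, so `CBV(P | ∅) = {x} ∩ {y} = ∅`.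
Nevertheless each branch is evaluated from the context of its subject IRI alone, and UNION
only adds multiplicities, so `[[P]]_W^ctx` is a function of `C_W(u1)` and `C_W(u2)`. -/

theorem CBV_pp_iri_iri (u p : String) (b : Trm) (X : Set ℕ) :
    CBV (.pp (.iri u) (.iri p) b) X = b.vars := by
  rw [CBV, if_pos (show (Trm.iri u).boundIn X from trivial), GP.vars,
    show (Trm.iri u).vars = ∅ from rfl, Set.empty_union]

theorem CBV_union (P Q : GP) (X : Set ℕ) : CBV (.union P Q) X = CBV P X ∩ CBV Q X := by
  rw [CBV]

noncomputable def evalFromContext (C : Set Triple) (u p : String) (b : Trm) : SolMap → ℕ∞ :=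
  fun μ => if domOf μ = b.vars ∧ ∃ o, appT μ b = some o ∧ (RT.iri u, p, o) ∈ C then 1 else 0

theorem evalCB_pp_iri_iri (W : WoLD) (u p : String) (b : Trm) :
    evalCB W (.pp (.iri u) (.iri p) b) = evalFromContext (Cw W (.iri u)) u p b := by
  funext μ
  rw [evalCB, evalFromContext]
  refine if_congr ?_ rfl rfl
  simp only [show (Trm.iri u).vars = ∅ from rfl, Set.empty_union,
    show appT μ (.iri u) = some (.iri u) from rfl, Option.some.injEq, exists_and_left,
    exists_eq_left']

theorem evalCB_union (W : WoLD) (P Q : GP) :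
    evalCB W (.union P Q) = unionC (evalCB W P) (evalCB W Q) := by
  rw [evalCB]

/-- A Web-safe graph pattern whose conditionally Web-bounded variables w.r.t. `∅` differ
from its variables: for `P = (⟨u1,p1,?x⟩ UNION ⟨u2,p2,?y⟩)` with `x ≠ y`,
`CBV(P | ∅) = ∅ ≠ {x, y} = vars(P)`, yet the context-based evaluation of `P` over any
finite Web of Linked Data is determined by the contexts of the two IRIs `u1` and `u2`
(i.e., computable with only the two IRI lookups `u1` and `u2`). -/
theorem webSafe_but_not_CBV (u1 u2 p1 p2 : String) (x y : ℕ) (hxy : x ≠ y) :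
    CBV (GP.union (.pp (.iri u1) (.iri p1) (.var x)) (.pp (.iri u2) (.iri p2) (.var y))) ∅
      = ∅ ∧
    (GP.union (.pp (.iri u1) (.iri p1) (.var x)) (.pp (.iri u2) (.iri p2) (.var y))).vars
      = {x, y} ∧
    CBV (GP.union (.pp (.iri u1) (.iri p1) (.var x)) (.pp (.iri u2) (.iri p2) (.var y))) ∅
      ≠ (GP.union (.pp (.iri u1) (.iri p1) (.var x)) (.pp (.iri u2) (.iri p2) (.var y))).vars ∧
    ∃ F : Set Triple → Set Triple → (SolMap → ℕ∞),
      ∀ W : WoLD,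
        evalCB W
          (GP.union (.pp (.iri u1) (.iri p1) (.var x)) (.pp (.iri u2) (.iri p2) (.var y)))
          = F (Cw W (RT.iri u1)) (Cw W (RT.iri u2)) := by
  have hCBV : CBV (GP.union (.pp (.iri u1) (.iri p1) (.var x))
      (.pp (.iri u2) (.iri p2) (.var y))) ∅ = ∅ := by
    rw [CBV_union, CBV_pp_iri_iri, CBV_pp_iri_iri, Trm.vars, Trm.vars,
      Set.singleton_inter_eq_empty, Set.mem_singleton_iff]
    exact hxy
  have hvars : (GP.union (.pp (.iri u1) (.iri p1) (.var x))
      (.pp (.iri u2) (.iri p2) (.var y))).vars = {x, y} := by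
    simp only [GP.vars, Trm.vars, Set.empty_union, Set.singleton_union]
  refine ⟨hCBV, hvars, ?_, ?_⟩
  · rw [hCBV, hvars]
    exact (Set.insert_nonempty x {y}).ne_empty.symm
  · refine ⟨fun C1 C2 => unionC (evalFromContext C1 u1 p1 (.var x))
      (evalFromContext C2 u2 p2 (.var y)), fun W => ?_⟩
    rw [evalCB_union, evalCB_pp_iri_iri, evalCB_pp_iri_iri]
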